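/- arXiv:1902.08980 — 9 statements merged into one kernel-verified Lean document; each statement's English description precedes it below -/
import Mathlib

section
/- Let Q be a rack and N a normal subgroup of LMlt(Q), the group generated by all left translations. Then the orbit equivalence O_N of the natural action of N on Q is a congruence of Q. -/
structure LeftQuasigroup (Q : Type*) where
  op : Q → Q → Q
  dv : Q → Q → Q
  dv_op : ∀ x y, dv x (op x y) = y
  op_dv : ∀ x y, op x (dv x y) = y

namespace LeftQuasigroup

variable {Q : Type*} (S : LeftQuasigroup Q)

/-- The left translation by `a`, as a permutation of `Q`. -/
def L (a : Q) : Equiv.Perm Q :=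
  ⟨S.op a, S.dv a, S.dv_op a, S.op_dv a⟩

/-- The left multiplication group. -/
def LMlt : Subgroup (Equiv.Perm Q) :=
  Subgroup.closure (Set.range S.L)

/-- The displacement group. -/
def Dis : Subgroup (Equiv.Perm Q) :=
  Subgroup.closure { f | ∃ a b, f = S.L a * (S.L b)⁻¹ }

/-- `α` is a congruence of the left quasigroup. -/
def IsCongruence (α : Q → Q → Prop) : Prop :=
  Equivalence α ∧
  (∀ a b c d, α a b → α c d → α (S.op a c) (S.op b d)) ∧
  (∀ a b c d, α a b → α c d → α (S.dv a c) (S.dv b d))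

/-- The displacement group relative to `α`: the smallest normal subgroup of
`LMlt` containing all `L a * (L b)⁻¹` with `α a b`, given explicitly as the
subgroup generated by the `LMlt`-conjugates of such elements. -/
def DisRel (α : Q → Q → Prop) : Subgroup (Equiv.Perm Q) :=
  Subgroup.closure
    { f | ∃ g ∈ S.LMlt, ∃ a b, α a b ∧ f = g * (S.L a * (S.L b)⁻¹) * g⁻¹ }

/-- The set `Dis^α = {h ∈ Dis(Q) : h(a) α a for all a}`. -/
def DisUpSet (α : Q → Q → Prop) : Set (Equiv.Perm Q) :=
  { h | h ∈ S.Dis ∧ ∀ a, α (h a) a }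

/-- Left self-distributivity, making a left quasigroup a rack. -/
def IsRack : Prop :=
  ∀ x y z, S.op x (S.op y z) = S.op (S.op x y) (S.op x z)

end LeftQuasigroup

open LeftQuasigroup

theorem L_mem {Q : Type*} (S : LeftQuasigroup Q) (a : Q) : S.L a ∈ S.LMlt :=
  Subgroup.subset_closure ⟨a, rfl⟩

theorem L_conj {Q : Type*} (S : LeftQuasigroup Q) (hSD : S.IsRack) :
    ∀ g ∈ S.LMlt, ∀ a, S.L (g a) = g * S.L a * g⁻¹ := by
  intro g hg
  refine Subgroup.closure_induction ?_ ?_ ?_ ?_ hg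
  · rintro f ⟨x, rfl⟩ a
    ext z
    show S.op (S.op x a) z = S.op x (S.op a (S.dv x z))
    rw [hSD x a (S.dv x z), S.op_dv x z]
  · intro a; simp
  · intro f h hf hh ihf ihh a
    have : (f * h) a = f (h a) := rfl
    rw [this, ihf, ihh]; group
  · intro f hf ihf a
    have := ihf (f⁻¹ a)
    rw [show f (f⁻¹ a) = a from Equiv.apply_symm_apply f a] at this
    rw [this]; group

/-- For a rack `Q` and `N` normal in `LMlt(Q)`, the orbit equivalence of the
natural action of `N` on `Q` is a congruence of `Q`. -/
theorem stmt_5 {Q : Type*} (S : LeftQuasigroup Q) (hSD : S.IsRack)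
    (N : Subgroup (Equiv.Perm Q)) (hN1 : N ≤ S.LMlt)
    (hN2 : ∀ g ∈ S.LMlt, ∀ n ∈ N, g * n * g⁻¹ ∈ N) :
    S.IsCongruence (fun a b => ∃ f ∈ N, f a = b) := by
  have hLb : ∀ b : Q, S.L b ∈ S.LMlt := fun b => L_mem S b
  have key : ∀ a b : Q, (∃ f ∈ N, f a = b) → S.L b * (S.L a)⁻¹ ∈ N := by
    rintro a b ⟨f, hf, rfl⟩
    have : S.L (f a) = f * S.L a * f⁻¹ := L_conj S hSD f (hN1 hf) a
    rw [this]
    have : f * S.L a * f⁻¹ * (S.L a)⁻¹ = f * (S.L a * f⁻¹ * (S.L a)⁻¹) := by group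
    rw [this]
    exact N.mul_mem hf (hN2 _ (hLb a) _ (N.inv_mem hf))
  refine ⟨⟨fun a => ⟨1, N.one_mem, rfl⟩,
    ?_, ?_⟩, ?_, ?_⟩
  · rintro a b ⟨f, hf, rfl⟩
    exact ⟨f⁻¹, N.inv_mem hf, Equiv.symm_apply_apply f a⟩
  · rintro a b c ⟨f, hf, rfl⟩ ⟨g, hg, rfl⟩
    exact ⟨g * f, N.mul_mem hg hf, rfl⟩
  · rintro a b c d hab ⟨g, hg, rfl⟩
    refine ⟨(S.L b * g * (S.L b)⁻¹) * (S.L b * (S.L a)⁻¹), ?_, ?_⟩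
    · exact N.mul_mem (hN2 _ (hLb b) _ hg) (key a b hab)
    · show (S.L b) (g ((S.L b)⁻¹ ((S.L b) ((S.L a)⁻¹ (S.op a c))))) = S.op b (g c)
      rw [show (S.L b)⁻¹ ((S.L b) ((S.L a)⁻¹ (S.op a c))) = (S.L a)⁻¹ (S.op a c) from Equiv.symm_apply_apply (S.L b) ((S.L a)⁻¹ (S.op a c))]
      have : (S.L a)⁻¹ (S.op a c) = c := S.dv_op a c
      rw [this]; rfl
  · rintro a b c d hab ⟨g, hg, rfl⟩
    refine ⟨((S.L b)⁻¹ * g * S.L b) * ((S.L b)⁻¹ * S.L a), ?_, ?_⟩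
    · have h1 : (S.L b)⁻¹ * g * S.L b = (S.L b)⁻¹ * g * ((S.L b)⁻¹)⁻¹ := by group
      have h2 : (S.L b)⁻¹ * S.L a = (S.L b)⁻¹ * (S.L b * (S.L a)⁻¹)⁻¹ * ((S.L b)⁻¹)⁻¹ := by
        group
      rw [h1, h2]
      exact N.mul_mem (hN2 _ (S.LMlt.inv_mem (hLb b)) _ hg)
        (hN2 _ (S.LMlt.inv_mem (hLb b)) _ (N.inv_mem (key a b hab)))
    · show (S.L b)⁻¹ (g ((S.L b) ((S.L b)⁻¹ ((S.L a) (S.dv a c))))) = S.dv b (g c)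
      rw [show (S.L b) ((S.L b)⁻¹ ((S.L a) (S.dv a c))) = (S.L a) (S.dv a c) from Equiv.apply_symm_apply (S.L b) ((S.L a) (S.dv a c))]
      have : (S.L a) (S.dv a c) = c := S.op_dv a c
      rw [this]; rfl
end

section
/- Let Q be a left quasigroup with a congruence α whose quotient Q/α is connected (i.e., the left multiplication group of Q/α acts transitively). Then all blocks of α have the same cardinality. Moreover, if Q is a quandle, the blocks of α are pairwise isomorphic subquandles. -/
open LeftQuasigroup
section helpers

variable {Q : Type*} (S : LeftQuasigroup Q) (α : Q → Q → Prop)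

lemma lmlt_pres (hα : S.IsCongruence α) {f : Equiv.Perm Q} (hf : f ∈ S.LMlt) :
    (∀ x y, α x y → α (f x) (f y)) ∧ (∀ x y, α x y → α (f⁻¹ x) (f⁻¹ y)) := by
  induction hf using Subgroup.closure_induction with
  | mem f hf =>
    obtain ⟨c, rfl⟩ := hf
    constructor
    · intro x y h; exact hα.2.1 c c x y (hα.1.refl c) h
    · intro x y h; exact hα.2.2 c c x y (hα.1.refl c) h
  | one => simp
  | mul f g hf hg ihf ihg =>
    refine ⟨fun x y h => ihf.1 _ _ (ihg.1 _ _ h), fun x y h => ?_⟩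
    rw [mul_inv_rev]
    exact ihg.2 _ _ (ihf.2 _ _ h)
  | inv f hf ih => simpa using ⟨ih.2, ih.1⟩

lemma lmlt_hom (hr : S.IsRack) {f : Equiv.Perm Q} (hf : f ∈ S.LMlt) :
    (∀ x y, f (S.op x y) = S.op (f x) (f y)) ∧
    (∀ x y, f⁻¹ (S.op x y) = S.op (f⁻¹ x) (f⁻¹ y)) := by
  induction hf using Subgroup.closure_induction with
  | mem f hf =>
    obtain ⟨c, rfl⟩ := hf
    constructor
    · intro x y; exact hr c x y
    · intro x y
      have : S.op c (S.op (S.dv c x) (S.dv c y)) = S.op x y := by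
        rw [hr, S.op_dv, S.op_dv]
      have := congrArg (S.dv c) this
      rw [S.dv_op] at this
      exact this.symm
  | one => simp
  | mul f g hf hg ihf ihg =>
    refine ⟨fun x y => ?_, fun x y => ?_⟩
    · simp only [Equiv.Perm.mul_apply, ihg.1, ihf.1]
    · rw [mul_inv_rev]
      simp only [Equiv.Perm.mul_apply, ihf.2, ihg.2]
  | inv f hf ih => simpa using ⟨ih.2, ih.1⟩

end helpers


/-- If `Q/α` is connected, all blocks of `α` have the same cardinality; if
moreover `Q` is a quandle, the blocks are pairwise isomorphic subquandles. -/
theorem stmt_6 {Q : Type*} (S : LeftQuasigroup Q) (α : Q → Q → Prop)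
    (hα : S.IsCongruence α)
    (hconn : ∀ a b : Q, ∃ f ∈ S.LMlt, α (f a) b) :
    (∀ a b : Q, Nonempty ({x // α a x} ≃ {x // α b x})) ∧
    (S.IsRack → (∀ x, S.op x x = x) →
      ∀ a b : Q, ∃ e : {x // α a x} ≃ {x // α b x},
        ∀ x y z : {x // α a x}, S.op x.val y.val = z.val →
          (e z).val = S.op (e x).val (e y).val) := by

  have mk : ∀ a b : Q, ∀ f : Equiv.Perm Q, f ∈ S.LMlt → α (f a) b →
      ∃ e : {x // α a x} ≃ {x // α b x}, ∀ x : {x // α a x}, (e x).val = f x.val := by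
    intro a b f hf hab
    have hp := lmlt_pres S α hα hf
    refine ⟨⟨fun x => ⟨f x.val, ?_⟩, fun y => ⟨f⁻¹ y.val, ?_⟩, ?_, ?_⟩, fun x => rfl⟩
    · exact hα.1.trans (hα.1.symm hab) (hp.1 _ _ x.2)
    · have h1 : α a (f⁻¹ b) := by
        have := hp.2 _ _ hab
        rwa [Equiv.Perm.inv_def, Equiv.symm_apply_apply, ← Equiv.Perm.inv_def] at this
      exact hα.1.trans h1 (hp.2 _ _ y.2)
    · intro x; ext; simp
    · intro y; ext; simp
  constructor
  · intro a b
    obtain ⟨f, hf, hab⟩ := hconn a b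
    obtain ⟨e, -⟩ := mk a b f hf hab
    exact ⟨e⟩
  · intro hr _ a b
    obtain ⟨f, hf, hab⟩ := hconn a b
    obtain ⟨e, he⟩ := mk a b f hf hab
    refine ⟨e, fun x y z hxyz => ?_⟩
    rw [he, he, he, ← (lmlt_hom S hr hf).1, hxyz]
end

section
/- Let Q be a left quasigroup and α a congruence. Then Dis_α, the smallest normal subgroup of LMlt(Q) containing all L_a L_b^{-1} with a α b, equals the set of all products L_{a_n}^{k_n}···L_{a_1}^{k_1} L_{b_1}^{-k_1}···L_{b_n}^{-k_n} with k_i ∈ ℤ and a_i α b_i for all i. -/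
open LeftQuasigroup

namespace StmtAux

variable {Q : Type*} (S : LeftQuasigroup Q)

/-- The "a-word". -/
def Aw (l : List (ℤ × Q × Q)) : Equiv.Perm Q :=
  ((l.map (fun p => S.L p.2.1 ^ p.1)).reverse).prod

/-- The "b-word". -/
def Bw (l : List (ℤ × Q × Q)) : Equiv.Perm Q :=
  (l.map (fun p => S.L p.2.2 ^ (-p.1))).prod

@[simp] lemma Aw_nil : Aw S ([] : List (ℤ × Q × Q)) = 1 := rfl

@[simp] lemma Bw_nil : Bw S ([] : List (ℤ × Q × Q)) = 1 := rfl

@[simp] lemma Aw_cons (h : ℤ × Q × Q) (t : List (ℤ × Q × Q)) :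
    Aw S (h :: t) = Aw S t * S.L h.2.1 ^ h.1 := by
  simp [Aw]

@[simp] lemma Bw_cons (h : ℤ × Q × Q) (t : List (ℤ × Q × Q)) :
    Bw S (h :: t) = S.L h.2.2 ^ (-h.1) * Bw S t := by
  simp [Bw]

lemma Aw_append (l₁ l₂ : List (ℤ × Q × Q)) :
    Aw S (l₁ ++ l₂) = Aw S l₂ * Aw S l₁ := by
  simp [Aw]

lemma Bw_append (l₁ l₂ : List (ℤ × Q × Q)) :
    Bw S (l₁ ++ l₂) = Bw S l₁ * Bw S l₂ := by
  simp [Bw]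

lemma L_mem_LMlt (a : Q) : S.L a ∈ S.LMlt :=
  Subgroup.subset_closure ⟨a, rfl⟩

lemma Aw_mem_LMlt (l : List (ℤ × Q × Q)) : Aw S l ∈ S.LMlt := by
  induction l with
  | nil => exact one_mem _
  | cons h t ih =>
      rw [Aw_cons]
      exact mul_mem ih (zpow_mem (L_mem_LMlt S h.2.1) h.1)

/-- `DisRel` is normalized by `LMlt`. -/
lemma disrel_conj {α : Q → Q → Prop} {g x : Equiv.Perm Q}
    (hg : g ∈ S.LMlt) (hx : x ∈ S.DisRel α) : g * x * g⁻¹ ∈ S.DisRel α := by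
  induction hx using Subgroup.closure_induction with
  | mem f hf =>
      obtain ⟨g', hg', a, b, hab, rfl⟩ := hf
      refine Subgroup.subset_closure ⟨g * g', mul_mem hg hg', a, b, hab, ?_⟩
      group
  | one => simpa using one_mem _
  | mul x y hx hy hx' hy' =>
      have : g * (x * y) * g⁻¹ = (g * x * g⁻¹) * (g * y * g⁻¹) := by group
      rw [this]; exact mul_mem hx' hy'
  | inv x hx hx' =>
      have : g * x⁻¹ * g⁻¹ = (g * x * g⁻¹)⁻¹ := by group
      rw [this]; exact inv_mem hx'

lemma LaLb_mem {α : Q → Q → Prop} {a b : Q} (hab : α a b) :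
    S.L a * (S.L b)⁻¹ ∈ S.DisRel α :=
  Subgroup.subset_closure ⟨1, one_mem _, a, b, hab, by group⟩

lemma LaLb_zpow_mem {α : Q → Q → Prop} (hα : S.IsCongruence α) {a b : Q}
    (hab : α a b) (k : ℤ) : S.L a ^ k * S.L b ^ (-k) ∈ S.DisRel α := by
  induction k using Int.induction_on with
  | zero => simpa using one_mem _
  | succ k ih =>
      have heq : S.L a ^ ((k : ℤ) + 1) * S.L b ^ (-((k : ℤ) + 1)) =
          S.L a * (S.L a ^ (k : ℤ) * S.L b ^ (-(k : ℤ))) * (S.L a)⁻¹ *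
            (S.L a * (S.L b)⁻¹) := by group
      rw [heq]
      exact mul_mem (disrel_conj S (L_mem_LMlt S a) ih) (LaLb_mem S hab)
  | pred k ih =>
      have hba : α b a := hα.1.symm hab
      have heq : S.L a ^ (-(k : ℤ) - 1) * S.L b ^ (-(-(k : ℤ) - 1)) =
          (S.L a)⁻¹ * (S.L a ^ (-(k : ℤ)) * S.L b ^ (-(-(k : ℤ)))) * S.L a *
            ((S.L a)⁻¹ * (S.L b * (S.L a)⁻¹) * S.L a) := by group
      rw [heq]
      refine mul_mem (disrel_conj S (inv_mem (L_mem_LMlt S a)) ?_) ?_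
      · exact ih
      · exact Subgroup.subset_closure
          ⟨(S.L a)⁻¹, inv_mem (L_mem_LMlt S a), b, a, hba, by group⟩

/-- Easy direction: such products lie in `DisRel`. -/
lemma prod_mem {α : Q → Q → Prop} (hα : S.IsCongruence α)
    (l : List (ℤ × Q × Q)) (hl : ∀ p ∈ l, α p.2.1 p.2.2) :
    Aw S l * Bw S l ∈ S.DisRel α := by
  induction l with
  | nil => simpa using one_mem _
  | cons h t ih =>
      have hmem : ∀ p ∈ t, α p.2.1 p.2.2 := fun p hp => hl p (List.mem_cons_of_mem _ hp)
      have hh : α h.2.1 h.2.2 := hl h (List.mem_cons_self)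
      have heq : Aw S (h :: t) * Bw S (h :: t) =
          Aw S t * (S.L h.2.1 ^ h.1 * S.L h.2.2 ^ (-h.1)) * (Aw S t)⁻¹ *
            (Aw S t * Bw S t) := by
        rw [Aw_cons, Bw_cons]; group
      rw [heq]
      exact mul_mem
        (disrel_conj S (Aw_mem_LMlt S t) (LaLb_zpow_mem S hα hh h.1)) (ih hmem)

/-- If the two components agree, `Bw` is the inverse of `Aw`. -/
lemma Bw_eq_inv_Aw (l : List (ℤ × Q × Q)) (hl : ∀ p ∈ l, p.2.1 = p.2.2) :
    Bw S l = (Aw S l)⁻¹ := by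
  induction l with
  | nil => simp
  | cons h t ih =>
      have h1 : h.2.1 = h.2.2 := hl h (List.mem_cons_self)
      rw [Aw_cons, Bw_cons, ih (fun p hp => hl p (List.mem_cons_of_mem _ hp)), ← h1]
      group

/-- The "mirror" list. -/
def mid (l : List (ℤ × Q × Q)) : List (ℤ × Q × Q) :=
  (l.map (fun p => (-p.1, p.2.2, p.2.2))).reverse

lemma mid_mem {l : List (ℤ × Q × Q)} {p : ℤ × Q × Q} (hp : p ∈ mid l) :
    p.2.1 = p.2.2 := by
  rw [mid, List.mem_reverse, List.mem_map] at hp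
  obtain ⟨q, _, rfl⟩ := hp
  rfl

lemma Aw_mid (l : List (ℤ × Q × Q)) : Aw S (mid l) = Bw S l := by
  induction l with
  | nil => simp [mid]
  | cons h t ih =>
      have : mid (h :: t) = mid t ++ [(-h.1, h.2.2, h.2.2)] := by simp [mid]
      rw [this, Aw_append, ih, Bw_cons]
      simp [Aw]

lemma Bw_mid (l : List (ℤ × Q × Q)) : Bw S (mid l) = (Bw S l)⁻¹ := by
  rw [Bw_eq_inv_Aw S (mid l) (fun p hp => mid_mem hp), Aw_mid]

/-- Every element of `LMlt` is a word `Aw` over diagonal pairs. -/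
lemma lmlt_word {g : Equiv.Perm Q} (hg : g ∈ S.LMlt) :
    ∃ m : List (ℤ × Q × Q), (∀ p ∈ m, p.2.1 = p.2.2) ∧ g = Aw S m := by
  induction hg using Subgroup.closure_induction with
  | mem f hf =>
      obtain ⟨c, rfl⟩ := hf
      exact ⟨[(1, c, c)], by simp, by simp [Aw]⟩
  | one => exact ⟨[], by simp, by simp⟩
  | mul x y hx hy hx' hy' =>
      obtain ⟨mx, hmx, rfl⟩ := hx'
      obtain ⟨my, hmy, rfl⟩ := hy'
      refine ⟨my ++ mx, ?_, by rw [Aw_append]⟩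
      intro p hp
      rcases List.mem_append.mp hp with h | h
      exacts [hmy p h, hmx p h]
  | inv x hx hx' =>
      obtain ⟨m, hm, rfl⟩ := hx'
      exact ⟨mid m, fun p hp => mid_mem hp,
        by rw [Aw_mid, Bw_eq_inv_Aw S m hm]⟩

/-- Swapping components. -/
def swp (p : ℤ × Q × Q) : ℤ × Q × Q := (p.1, p.2.2, p.2.1)

lemma Aw_swp (l : List (ℤ × Q × Q)) : Aw S (mid (l.map swp)) = (Aw S l)⁻¹ := by
  induction l with
  | nil => simp [mid]
  | cons h t ih =>
      have : mid ((h :: t).map swp) = mid (t.map swp) ++ [(-h.1, h.2.1, h.2.1)] := by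
        simp [mid, swp]
      rw [this, Aw_append, ih, Aw_cons]
      simp [Aw]

lemma Bw_swp (l : List (ℤ × Q × Q)) : Bw S (l.map swp) = (Aw S l)⁻¹ := by
  induction l with
  | nil => simp
  | cons h t ih =>
      have : (h :: t).map swp = (h.1, h.2.2, h.2.1) :: t.map swp := by simp [swp]
      rw [this, Bw_cons, Aw_cons]
      simp only at *
      rw [ih]
      group

lemma Aw_swp' (l : List (ℤ × Q × Q)) : Aw S (l.map swp) = (Bw S l)⁻¹ := by
  induction l with
  | nil => simp
  | cons h t ih =>
      have : (h :: t).map swp = (h.1, h.2.2, h.2.1) :: t.map swp := by simp [swp]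
      rw [this, Aw_cons, Bw_cons]
      simp only at *
      rw [ih]
      group

end StmtAux

open StmtAux

/-- Elements of `Dis_α` are exactly the products
`L_{a_n}^{k_n} ⋯ L_{a_1}^{k_1} L_{b_1}^{-k_1} ⋯ L_{b_n}^{-k_n}` with `a_i α b_i`. -/
theorem stmt_8 {Q : Type*} (S : LeftQuasigroup Q) (α : Q → Q → Prop)
    (hα : S.IsCongruence α) :
    ∀ g : Equiv.Perm Q, g ∈ S.DisRel α ↔
      ∃ l : List (ℤ × Q × Q), (∀ p ∈ l, α p.2.1 p.2.2) ∧
        g = ((l.map (fun p => S.L p.2.1 ^ p.1)).reverse.prod) *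
            (l.map (fun p => S.L p.2.2 ^ (-p.1))).prod := by

  intro g
  have hAB : ∀ l : List (ℤ × Q × Q),
      ((l.map (fun p => S.L p.2.1 ^ p.1)).reverse.prod) *
        (l.map (fun p => S.L p.2.2 ^ (-p.1))).prod = Aw S l * Bw S l :=
    fun l => rfl
  constructor
  · intro hg
    induction hg using Subgroup.closure_induction with
    | mem f hf =>
        obtain ⟨g', hg', a, b, hab, rfl⟩ := hf
        obtain ⟨m, hm, rfl⟩ := lmlt_word S hg'
        refine ⟨(1, a, b) :: m, ?_, ?_⟩
        · intro p hp
          rcases List.mem_cons.mp hp with h | h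
          · rw [h]; exact hab
          · rw [hm p h]; exact hα.1.refl _
        · rw [hAB, Aw_cons, Bw_cons, Bw_eq_inv_Aw S m hm]
          simp only
          group
    | one => exact ⟨[], by simp, by simp [Aw, Bw]⟩
    | mul x y hx hy hx' hy' =>
        obtain ⟨lx, hlx, rfl⟩ := hx'
        obtain ⟨ly, hly, rfl⟩ := hy'
        rw [hAB, hAB]
        refine ⟨ly ++ mid lx ++ lx, ?_, ?_⟩
        · intro p hp
          rcases List.mem_append.mp hp with h | h
          · rcases List.mem_append.mp h with h' | h'
            · exact hly p h'
            · rw [mid_mem h']; exact hα.1.refl _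
          · exact hlx p h
        · rw [hAB, Aw_append, Aw_append, Bw_append, Bw_append, Aw_mid, Bw_mid]
          group
    | inv x hx hx' =>
        obtain ⟨l, hl, rfl⟩ := hx'
        rw [hAB]
        refine ⟨l.map swp, ?_, ?_⟩
        · intro p hp
          obtain ⟨q, hq, rfl⟩ := List.mem_map.mp hp
          exact hα.1.symm (hl q hq)
        · rw [hAB, Aw_swp', Bw_swp]
          group
  · rintro ⟨l, hl, rfl⟩
    rw [hAB]
    exact prod_mem S hα l hl
end

section
/- Let Q be a left quasigroup and α, β congruences. Then Dis^{α∧β} = Dis^α ∩ Dis^β and Dis_{α∨β} = Dis_α · Dis_β. -/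
open LeftQuasigroup

open Pointwise

namespace Relation.EqvGen

variable {X : Type*}

theorem apply_of_compatible {r : X → X → Prop} {f : X → X}
    (hf : ∀ a b, r a b → r (f a) (f b)) {a b : X} (h : EqvGen r a b) : EqvGen r (f a) (f b) := by
  induction h with
  | rel x y hxy => exact .rel _ _ (hf x y hxy)
  | refl x => exact .refl _
  | symm x y _ ih => exact .symm _ _ ih
  | trans x y z _ _ ih₁ ih₂ => exact .trans _ _ _ ih₁ ih₂

theorem or_compatible {α β : X → X → Prop} (hα : ∀ x, α x x) (hβ : ∀ x, β x x)
    {f : X → X → X} (hfα : ∀ a b c d, α a b → α c d → α (f a c) (f b d))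
    (hfβ : ∀ a b c d, β a b → β c d → β (f a c) (f b d)) {a b c d : X}
    (hab : EqvGen (fun x y => α x y ∨ β x y) a b)
    (hcd : EqvGen (fun x y => α x y ∨ β x y) c d) :
    EqvGen (fun x y => α x y ∨ β x y) (f a c) (f b d) := by
  have left := apply_of_compatible (f := (f · c)) (fun x y hxy => hxy.imp
    (fun h => hfα _ _ _ _ h (hα c)) (fun h => hfβ _ _ _ _ h (hβ c))) hab
  have right := apply_of_compatible (f := f b) (fun x y hxy => hxy.imp
    (fun h => hfα _ _ _ _ (hα b) h) (fun h => hfβ _ _ _ _ (hβ b) h)) hcd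
  exact .trans _ _ _ left right

end Relation.EqvGen

namespace LeftQuasigroup

variable {Q : Type*} (S : LeftQuasigroup Q)

variable {S} in
theorem IsCongruence.eqvGen_or {α β : Q → Q → Prop} (hα : S.IsCongruence α)
    (hβ : S.IsCongruence β) :
    S.IsCongruence (Relation.EqvGen (fun x y => α x y ∨ β x y)) :=
  ⟨Relation.EqvGen.is_equivalence _,
    fun _ _ _ _ => Relation.EqvGen.or_compatible hα.1.refl hβ.1.refl hα.2.1 hβ.2.1,
    fun _ _ _ _ => Relation.EqvGen.or_compatible hα.1.refl hβ.1.refl hα.2.2 hβ.2.2⟩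

theorem DisUpSet_and (α β : Q → Q → Prop) :
    S.DisUpSet (fun a b => α a b ∧ β a b) = S.DisUpSet α ∩ S.DisUpSet β := by
  ext h
  simp only [DisUpSet, Set.mem_ofPred_eq, Set.mem_inter_iff, forall_and]
  tauto

theorem L_mem_LMlt (a : Q) : S.L a ∈ S.LMlt :=
  Subgroup.subset_closure ⟨a, rfl⟩

theorem L_mul_inv_mem_DisRel {γ : Q → Q → Prop} {a b : Q} (h : γ a b) :
    S.L a * (S.L b)⁻¹ ∈ S.DisRel γ :=
  Subgroup.subset_closure ⟨1, one_mem _, a, b, h, by group⟩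

theorem DisRel_le_LMlt (γ : Q → Q → Prop) : S.DisRel γ ≤ S.LMlt := by
  rw [DisRel, Subgroup.closure_le]
  rintro _ ⟨g, hg, a, b, -, rfl⟩
  exact mul_mem (mul_mem hg (mul_mem (S.L_mem_LMlt a) (inv_mem (S.L_mem_LMlt b)))) (inv_mem hg)

theorem LMlt_le_normalizer_DisRel (γ : Q → Q → Prop) :
    S.LMlt ≤ Subgroup.normalizer (S.DisRel γ : Set (Equiv.Perm Q)) := by
  rw [DisRel, Subgroup.le_normalizer_closure_iff]
  rintro h hh _ ⟨g, hg, a, b, hab, rfl⟩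
  exact Subgroup.subset_closure ⟨h * g, mul_mem hh hg, a, b, hab, by group⟩

theorem DisRel_mono {γ δ : Q → Q → Prop} (h : ∀ a b, γ a b → δ a b) :
    S.DisRel γ ≤ S.DisRel δ :=
  Subgroup.closure_mono fun _ ⟨g, hg, a, b, hab, hf⟩ => ⟨g, hg, a, b, h a b hab, hf⟩

theorem DisRel_le_of_forall {γ : Q → Q → Prop} {H : Subgroup (Equiv.Perm Q)}
    (hH : S.LMlt ≤ Subgroup.normalizer (H : Set (Equiv.Perm Q)))
    (hγ : ∀ a b, γ a b → S.L a * (S.L b)⁻¹ ∈ H) : S.DisRel γ ≤ H := by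
  rw [DisRel, Subgroup.closure_le]
  rintro _ ⟨g, hg, a, b, hab, rfl⟩
  exact (Subgroup.mem_normalizer_iff.mp (hH hg) _).mp (hγ a b hab)

theorem equivalence_L_mul_inv_mem (H : Subgroup (Equiv.Perm Q)) :
    Equivalence fun a b => S.L a * (S.L b)⁻¹ ∈ H where
  refl a := by simp
  symm h := by simpa using H.inv_mem h
  trans h₁ h₂ := by simpa [mul_assoc] using H.mul_mem h₁ h₂

theorem DisRel_join {α β : Q → Q → Prop} (hα : S.IsCongruence α) (hβ : S.IsCongruence β) :
    S.DisRel (fun a b => ∀ γ : Q → Q → Prop, S.IsCongruence γ →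
        (∀ x y, α x y → γ x y) → (∀ x y, β x y → γ x y) → γ a b) =
      S.DisRel α ⊔ S.DisRel β := by
  refine le_antisymm ?_ (sup_le (S.DisRel_mono fun a b h _ _ hαγ _ => hαγ a b h)
    (S.DisRel_mono fun a b h _ _ _ hβγ => hβγ a b h))
  have hnorm :
      S.LMlt ≤ Subgroup.normalizer ((S.DisRel α ⊔ S.DisRel β : Subgroup _) : Set _) :=
    (le_inf (S.LMlt_le_normalizer_DisRel α) (S.LMlt_le_normalizer_DisRel β)).trans
      (Subgroup.normalizer_inf_normalizer_le_normalizer_sup _ _)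
  refine S.DisRel_le_of_forall hnorm fun a b hab => ?_
  have hEqvGen := hab _ (hα.eqvGen_or hβ)
    (fun x y h => Relation.EqvGen.rel x y (Or.inl h))
    (fun x y h => Relation.EqvGen.rel x y (Or.inr h))
  refine (S.equivalence_L_mul_inv_mem _).eqvGen_iff.mp (Relation.EqvGen.mono ?_ _ _ hEqvGen)
  rintro x y (h | h)
  · exact Subgroup.mem_sup_left (S.L_mul_inv_mem_DisRel h)
  · exact Subgroup.mem_sup_right (S.L_mul_inv_mem_DisRel h)

end LeftQuasigroup

/-- `Dis^{α∧β} = Dis^α ∩ Dis^β` and `Dis_{α∨β} = Dis_α · Dis_β`. -/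
theorem stmt_9 {Q : Type*} (S : LeftQuasigroup Q) (α β : Q → Q → Prop)
    (hα : S.IsCongruence α) (hβ : S.IsCongruence β) :
    S.DisUpSet (fun a b => α a b ∧ β a b) = S.DisUpSet α ∩ S.DisUpSet β ∧
    (S.DisRel (fun a b => ∀ γ : Q → Q → Prop, S.IsCongruence γ →
        (∀ x y, α x y → γ x y) → (∀ x y, β x y → γ x y) → γ a b) :
          Set (Equiv.Perm Q)) =
      (S.DisRel α : Set (Equiv.Perm Q)) * (S.DisRel β : Set (Equiv.Perm Q)) := by
  refine ⟨S.DisUpSet_and α β, ?_⟩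
  rw [S.DisRel_join hα hβ]
  exact Subgroup.coe_mul_of_left_le_normalizer_right _ _
    ((S.DisRel_le_LMlt α).trans (S.LMlt_le_normalizer_DisRel β))
end

section
/- Let Q be a rack and α a congruence. Then the commutator [Dis^α, LMlt(Q)] is contained in Dis_α. -/
open LeftQuasigroup

section proofs
variable {Q : Type*} (S : LeftQuasigroup Q)

lemma SL_apply (a x : Q) : S.L a x = S.op a x := rfl

lemma lmlt_aut (hSD : S.IsRack) : ∀ h ∈ S.LMlt, ∀ x y, h (S.op x y) = S.op (h x) (h y) := by
  intro h hh
  refine Subgroup.closure_induction ?_ ?_ ?_ ?_ hh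
  · rintro f ⟨a, rfl⟩ x y; exact hSD a x y
  · intro x y; rfl
  · intro f g _ _ hf hg x y
    simp only [Equiv.Perm.mul_apply, hg, hf]
  · intro f _ hf x y
    have := hf (f⁻¹ x) (f⁻¹ y)
    simp only [Equiv.Perm.coe_inv, Equiv.apply_symm_apply] at this
    rw [← this]; simp only [Equiv.Perm.coe_inv, Equiv.symm_apply_apply]

lemma dis_le_lmlt : S.Dis ≤ S.LMlt := by
  rw [LeftQuasigroup.Dis, Subgroup.closure_le]
  rintro f ⟨a, b, rfl⟩
  exact mul_mem (Subgroup.subset_closure ⟨a, rfl⟩)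
    (inv_mem (Subgroup.subset_closure ⟨b, rfl⟩))

lemma conj_L (hSD : S.IsRack) {h : Equiv.Perm Q} (hh : h ∈ S.LMlt) (a : Q) :
    h * S.L a * h⁻¹ = S.L (h a) := by
  ext x
  show h (S.op a (h⁻¹ x)) = S.op (h a) x
  rw [lmlt_aut S hSD h hh, Equiv.Perm.coe_inv, Equiv.apply_symm_apply]

lemma disrel_conj (α : Q → Q → Prop) {g k : Equiv.Perm Q} (hg : g ∈ S.LMlt)
    (hk : k ∈ S.DisRel α) : g * k * g⁻¹ ∈ S.DisRel α := by
  refine Subgroup.closure_induction ?_ ?_ ?_ ?_ hk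
  · rintro f ⟨g', hg', a, b, hab, rfl⟩
    refine Subgroup.subset_closure ⟨g * g', mul_mem hg hg', a, b, hab, ?_⟩
    group
  · simpa using one_mem _
  · intro x y _ _ hx hy
    have := mul_mem hx hy
    have e : g * x * g⁻¹ * (g * y * g⁻¹) = g * (x * y) * g⁻¹ := by group
    rwa [e] at this
  · intro x _ hx
    have := inv_mem hx
    have e : (g * x * g⁻¹)⁻¹ = g * x⁻¹ * g⁻¹ := by group
    rwa [e] at this
end proofs

/-- In a rack, `[Dis^α, LMlt(Q)] ≤ Dis_α`. -/
theorem stmt_10 {Q : Type*} (S : LeftQuasigroup Q) (hSD : S.IsRack)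
    (α : Q → Q → Prop) (hα : S.IsCongruence α) :
    ∀ h ∈ S.DisUpSet α, ∀ g ∈ S.LMlt, h * g * h⁻¹ * g⁻¹ ∈ S.DisRel α := by
  rintro h ⟨hdis, hαh⟩ g hg
  have hhL : h ∈ S.LMlt := dis_le_lmlt S hdis
  induction hg using Subgroup.closure_induction with
  | mem f hf =>
    obtain ⟨a, rfl⟩ := hf
    rw [conj_L S hSD hhL a]
    exact Subgroup.subset_closure ⟨1, one_mem _, h a, a, hαh a, by group⟩
  | one => simpa using one_mem _
  | mul g1 g2 hg1 hg2 ih1 ih2 =>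
    have := mul_mem ih1 (disrel_conj S α hg1 ih2)
    have e : h * g1 * h⁻¹ * g1⁻¹ * (g1 * (h * g2 * h⁻¹ * g2⁻¹) * g1⁻¹) =
        h * (g1 * g2) * h⁻¹ * (g1 * g2)⁻¹ := by group
    rwa [e] at this
  | inv g hg ih =>
    have := disrel_conj S α (inv_mem hg) (inv_mem ih)
    have e : g⁻¹ * (h * g * h⁻¹ * g⁻¹)⁻¹ * g⁻¹⁻¹ = h * g⁻¹ * h⁻¹ * g⁻¹⁻¹ := by group
    rwa [e] at this
end

section
/- Let Q be a rack. The maps α ↦ Dis_α and N ↦ con_N form a monotone Galois connection between the congruence lattice Con(Q) and the lattice Norm(Q) of subgroups of Dis(Q) normal in LMlt(Q): that is, Dis_α ≤ N if and only if α ≤ con_N. -/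
namespace LeftQuasigroup

variable {Q : Type*} (S : LeftQuasigroup Q) {α : Q → Q → Prop}

theorem L_mul_inv_L_mem_disRel {a b : Q} (hab : α a b) : S.L a * (S.L b)⁻¹ ∈ S.DisRel α :=
  Subgroup.subset_closure ⟨1, S.LMlt.one_mem, a, b, hab, by group⟩

theorem disRel_le {N : Subgroup (Equiv.Perm Q)}
    (hN : ∀ g ∈ S.LMlt, ∀ n ∈ N, g * n * g⁻¹ ∈ N)
    (h : ∀ a b, α a b → S.L a * (S.L b)⁻¹ ∈ N) : S.DisRel α ≤ N :=
  (Subgroup.closure_le N).mpr <| by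
    rintro _ ⟨g, hg, a, b, hab, rfl⟩
    exact hN g hg _ (h a b hab)

end LeftQuasigroup

open LeftQuasigroup

theorem stmt_13_general {Q : Type*} (S : LeftQuasigroup Q)
    (α : Q → Q → Prop)
    (N : Subgroup (Equiv.Perm Q))
    (hN2 : ∀ g ∈ S.LMlt, ∀ n ∈ N, g * n * g⁻¹ ∈ N) :
    S.DisRel α ≤ N ↔ ∀ a b, α a b → S.L a * (S.L b)⁻¹ ∈ N :=
  ⟨fun h _ _ hab => h (S.L_mul_inv_L_mem_disRel hab), S.disRel_le hN2⟩

/-- The Galois connection: `Dis_α ≤ N` iff `α ≤ con_N`. -/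
theorem stmt_13 {Q : Type*} (S : LeftQuasigroup Q) (hSD : S.IsRack)
    (α : Q → Q → Prop) (hα : S.IsCongruence α)
    (N : Subgroup (Equiv.Perm Q)) (hN1 : N ≤ S.Dis)
    (hN2 : ∀ g ∈ S.LMlt, ∀ n ∈ N, g * n * g⁻¹ ∈ N) :
    S.DisRel α ≤ N ↔ ∀ a b, α a b → S.L a * (S.L b)⁻¹ ∈ N :=
  stmt_13_general S α N hN2
end

section
/- Let Q be a rack and α a congruence. The quotient Q/α is faithful (its Cayley representation a ↦ L_a is injective) if and only if α = con_{Dis^α}. -/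
open LeftQuasigroup

namespace LeftQuasigroup

variable {Q : Type*} (S : LeftQuasigroup Q)

theorem L_mul_inv_L_apply (a b c : Q) : (S.L a * (S.L b)⁻¹) c = S.op a (S.dv b c) := rfl

theorem L_mul_inv_L_mem_Dis (a b : Q) : S.L a * (S.L b)⁻¹ ∈ S.Dis :=
  Subgroup.subset_closure ⟨a, b, rfl⟩

/-- Substitute `c ↦ b c`, which ranges over all of `Q` since `L b` is a bijection. -/
theorem L_mul_inv_L_mem_DisUpSet_iff (α : Q → Q → Prop) (a b : Q) :
    S.L a * (S.L b)⁻¹ ∈ S.DisUpSet α ↔ ∀ c, α (S.op a c) (S.op b c) := by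
  refine ⟨fun h c => ?_, fun h => ⟨S.L_mul_inv_L_mem_Dis a b, fun c => ?_⟩⟩
  · simpa only [L_mul_inv_L_apply, dv_op] using h.2 (S.op b c)
  · simpa only [L_mul_inv_L_apply, op_dv] using h (S.dv b c)

theorem IsCongruence.op_right {α : Q → Q → Prop} (hα : S.IsCongruence α) {a b : Q}
    (hab : α a b) (c : Q) : α (S.op a c) (S.op b c) :=
  hα.2.1 a b c c hab (hα.1.refl c)

end LeftQuasigroup

theorem stmt_14_general {Q : Type*} (S : LeftQuasigroup Q)
    (α : Q → Q → Prop) (hα : S.IsCongruence α) :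
    (∀ a b : Q, (∀ c, α (S.op a c) (S.op b c)) → α a b) ↔
    (∀ a b : Q, α a b ↔ S.L a * (S.L b)⁻¹ ∈ S.DisUpSet α) := by
  simp only [L_mul_inv_L_mem_DisUpSet_iff]
  exact ⟨fun hfaithful a b => ⟨hα.op_right S, hfaithful a b⟩, fun hcon a b => (hcon a b).2⟩

/-- `Q/α` is faithful if and only if `α = con_{Dis^α}`. -/
theorem stmt_14 {Q : Type*} (S : LeftQuasigroup Q) (hSD : S.IsRack)
    (α : Q → Q → Prop) (hα : S.IsCongruence α) :
    (∀ a b : Q, (∀ c, α (S.op a c) (S.op b c)) → α a b) ↔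
    (∀ a b : Q, α a b ↔ S.L a * (S.L b)⁻¹ ∈ S.DisUpSet α) :=
  stmt_14_general S α hα
end

section
/- Let Q be a faithful quandle, α a congruence, and N ≤ Dis(Q). If every element of N commutes with every element of Dis_α, then N acts α-semiregularly on Q: for every h ∈ N and a ∈ Q with h(a)=a, we have h(b)=b for all b with b α a. -/
/-! Every `h ∈ N` lies in `LMlt`, so it is an automorphism and conjugates `L a * (L b)⁻¹` to
`L (h a) * (L (h b))⁻¹`. If `h a = a` and `h` centralizes `Dis_α ∋ L a * (L b)⁻¹`, this forces
`L (h b) = L b`, and faithfulness gives `h b = b`. -/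

namespace LeftQuasigroup

variable {Q : Type*} (S : LeftQuasigroup Q)

theorem map_op_of_mem_LMlt (hSD : S.IsRack) {h : Equiv.Perm Q} (hh : h ∈ S.LMlt) (x y : Q) :
    h (S.op x y) = S.op (h x) (h y) := by
  induction hh using Subgroup.closure_induction generalizing x y with
  | mem f hf =>
    obtain ⟨a, rfl⟩ := hf
    exact hSD a x y
  | one => rfl
  | mul f g _ _ hf hg => simp only [Equiv.Perm.mul_apply, hg, hf]
  | inv f _ hf =>
    apply f.injective
    rw [hf]
    simp

theorem Dis_le_LMlt : S.Dis ≤ S.LMlt := by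
  rw [Dis, Subgroup.closure_le]
  rintro f ⟨a, b, rfl⟩
  exact mul_mem (Subgroup.subset_closure ⟨a, rfl⟩) (inv_mem (Subgroup.subset_closure ⟨b, rfl⟩))

theorem L_mul_L_inv_mem_DisRel {α : Q → Q → Prop} {a b : Q} (hab : α a b) :
    S.L a * (S.L b)⁻¹ ∈ S.DisRel α :=
  Subgroup.subset_closure ⟨1, one_mem _, a, b, hab, by group⟩

theorem conj_L_of_map_op {h : Equiv.Perm Q} (hh : ∀ x y, h (S.op x y) = S.op (h x) (h y))
    (x : Q) : h * S.L x * h⁻¹ = S.L (h x) := by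
  rw [mul_inv_eq_iff_eq_mul]
  ext y
  exact hh x y

end LeftQuasigroup

open LeftQuasigroup

theorem stmt_15_general {Q : Type*} (S : LeftQuasigroup Q) (hSD : S.IsRack)
    (hfaith : ∀ a b : Q, (∀ c, S.op a c = S.op b c) → a = b)
    (α : Q → Q → Prop)
    (N : Subgroup (Equiv.Perm Q)) (hN : N ≤ S.Dis)
    (hcomm : ∀ n ∈ N, ∀ g ∈ S.DisRel α, n * g = g * n) :
    ∀ h ∈ N, ∀ a b : Q, α a b → h a = a → h b = b := by
  intro h hh a b hab ha
  have hconj := S.conj_L_of_map_op (S.map_op_of_mem_LMlt hSD (S.Dis_le_LMlt (hN hh)))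
  have hfix : h * (S.L a * (S.L b)⁻¹) * h⁻¹ = S.L a * (S.L b)⁻¹ := by
    rw [hcomm h hh _ (S.L_mul_L_inv_mem_DisRel hab), mul_inv_cancel_right]
  have hL : S.L (h b) = S.L b := by
    have hmoved : h * (S.L a * (S.L b)⁻¹) * h⁻¹ = S.L (h a) * (S.L (h b))⁻¹ := by
      rw [← hconj, ← hconj]
      group
    rw [hfix, ha] at hmoved
    exact inv_injective (mul_left_cancel hmoved).symm
  exact hfaith _ _ fun c => congrArg (· c) hL

/-- In a faithful quandle, if `N ≤ Dis(Q)` centralizes `Dis_α`, then `N` acts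
`α`-semiregularly. -/
theorem stmt_15 {Q : Type*} (S : LeftQuasigroup Q) (hSD : S.IsRack)
    (hidem : ∀ x, S.op x x = x)
    (hfaith : ∀ a b : Q, (∀ c, S.op a c = S.op b c) → a = b)
    (α : Q → Q → Prop) (hα : S.IsCongruence α)
    (N : Subgroup (Equiv.Perm Q)) (hN : N ≤ S.Dis)
    (hcomm : ∀ n ∈ N, ∀ g ∈ S.DisRel α, n * g = g * n) :
    ∀ h ∈ N, ∀ a b : Q, α a b → h a = a → h b = b :=
  stmt_15_general S hSD hfaith α N hN hcomm
end

section
/- Let Q be a rack. Then con_{Z(Dis(Q))} equals the set of pairs (a,b) such that (u*a)*(b*v) = (u*b)*(a*v) for all u,v ∈ Q. -/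
open LeftQuasigroup

/-! In a rack `L (x * y) = L x * L y * (L x)⁻¹`, so `(u*a)*(b*v) = L u (L a (L u)⁻¹ L b v)`, and the
identity `(u*a)*(b*v) = (u*b)*(a*v)` for all `v` says `L a (L u)⁻¹ L b = L b (L u)⁻¹ L a`, i.e. that
`L a (L b)⁻¹` commutes with `L b (L u)⁻¹`. For fixed `b` these elements `L b (L u)⁻¹` generate
`Dis(Q)`, so this holds for all `u` exactly when `L a (L b)⁻¹` is central in `Dis(Q)`. -/

theorem commute_mul_inv_mul_inv_iff {G : Type*} [Group G] (a b u : G) :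
    Commute (a * b⁻¹) (b * u⁻¹) ↔ a * u⁻¹ * b = b * u⁻¹ * a := by
  rw [commute_iff_eq, ← mul_left_inj b]
  simp only [mul_assoc, inv_mul_cancel_left, inv_mul_cancel, mul_one]

/-- Fixing `b` loses no generators: `f i * (f j)⁻¹ = (f b * (f i)⁻¹)⁻¹ * (f b * (f j)⁻¹)`. -/
theorem Commute.of_mem_closure_mul_inv {G ι : Type*} [Group G] (f : ι → G) (b : ι) {x g : G}
    (hx : ∀ i, Commute x (f b * (f i)⁻¹))
    (hg : g ∈ Subgroup.closure {g | ∃ i j, g = f i * (f j)⁻¹}) : Commute x g := by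
  induction hg using Subgroup.closure_induction with
  | mem _ h =>
    obtain ⟨i, j, rfl⟩ := h
    simpa [mul_assoc] using (hx i).inv_right.mul_right (hx j)
  | one => exact Commute.one_right x
  | mul _ _ _ _ h₁ h₂ => exact h₁.mul_right h₂
  | inv _ _ h => exact h.inv_right

namespace LeftQuasigroup

variable {Q : Type*} {S : LeftQuasigroup Q}

theorem IsRack.L_op (hS : S.IsRack) (x y : Q) : S.L (S.op x y) = S.L x * S.L y * (S.L x)⁻¹ := by
  ext z
  simpa [L, Equiv.Perm.mul_apply, S.op_dv] using (hS x y (S.dv x z)).symm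

theorem IsRack.op_op_comm_iff (hS : S.IsRack) (a b u : Q) :
    (∀ v, S.op (S.op u a) (S.op b v) = S.op (S.op u b) (S.op a v)) ↔
      S.L a * (S.L u)⁻¹ * S.L b = S.L b * (S.L u)⁻¹ * S.L a := by
  change (∀ v, (S.L (S.op u a) * S.L b) v = (S.L (S.op u b) * S.L a) v) ↔ _
  rw [← Equiv.ext_iff, hS.L_op, hS.L_op]
  simp only [mul_assoc, mul_right_inj]

end LeftQuasigroup

/-- `con_{Z(Dis(Q))}` is exactly the set of pairs `(a,b)` such that
`(u*a)*(b*v) = (u*b)*(a*v)` for all `u, v`. -/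
theorem stmt_16 {Q : Type*} (S : LeftQuasigroup Q) (hSD : S.IsRack) :
    ∀ a b : Q,
      (S.L a * (S.L b)⁻¹ ∈ S.Dis ∧
        ∀ g ∈ S.Dis, (S.L a * (S.L b)⁻¹) * g = g * (S.L a * (S.L b)⁻¹)) ↔
      (∀ u v : Q, S.op (S.op u a) (S.op b v) = S.op (S.op u b) (S.op a v)) := by
  intro a b
  simp only [hSD.op_op_comm_iff, ← commute_mul_inv_mul_inv_iff]
  constructor
  · rintro ⟨-, hcomm⟩ u
    exact hcomm _ (Subgroup.subset_closure ⟨b, u, rfl⟩)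
  · intro hcomm
    exact ⟨Subgroup.subset_closure ⟨a, b, rfl⟩,
      fun g hg => (Commute.of_mem_closure_mul_inv S.L b hcomm hg).eq⟩
end
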